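/- arXiv:1906.09001 — 2 statements merged into one kernel-verified Lean document; each statement's English description precedes it below -/
import Mathlib

section
/- Let (Ω, 𝔪) be a measure space, let 1 < s < α, let λ > 0, let a : Ω → [0,∞) be measurable with a^{α/(α−s)} integrable, let g : Ω → [0,∞) be integrable, and let u ∈ L^α(Ω) with ∫_Ω |u|^α d𝔪 > 0. If ∫_Ω g d𝔪 + ∫_Ω |u|^α d𝔪 = λ·∫_Ω a|u|^s d𝔪, then ∫_Ω g d𝔪 < ((α−s)/α)·λ^{α/(α−s)}·∫_Ω a^{α/(α−s)} d𝔪. (This is the quantitative core of the non-existence part of Theorem 2: any solution of −div[φ′(|∇u|²)∇u] + |u|^{α−2}u = λ a(x)|u|^{s−2}u forces this bound with g = φ′(|∇u|²)|∇u|², so no solution exists when λ is small.) -/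
/-!
Young's inequality with the conjugate exponents `α/(α-s)` and `α/s`, applied pointwise to
`(λ a) · |u|^s` and integrated, gives
`λ ∫ a|u|^s ≤ (s/α) ∫ |u|^α + ((α-s)/α) λ^{α/(α-s)} ∫ a^{α/(α-s)}`.
Substituting the identity `∫ g = λ ∫ a|u|^s - ∫ |u|^α` leaves
`∫ g ≤ ((α-s)/α) λ^{α/(α-s)} ∫ a^{α/(α-s)} - ((α-s)/α) ∫ |u|^α`, and the last term is negative.
-/

open MeasureTheory

theorem mul_rpow_le_young {s α b t : ℝ} (hs : 0 < s) (hsα : s < α) (hb : 0 ≤ b) (ht : 0 ≤ t) :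
    b * t ^ s ≤ s / α * t ^ α + (α - s) / α * b ^ (α / (α - s)) := by
  have hαs : 0 < α - s := by linarith
  have hconj : (α / (α - s)).HolderConjugate (α / s) := by
    rw [Real.holderConjugate_iff]
    refine ⟨by rw [lt_div_iff₀ hαs]; linarith, ?_⟩
    field_simp [show α ≠ 0 by linarith]
    ring
  have hpow : (t ^ s) ^ (α / s) = t ^ α := by
    rw [← Real.rpow_mul ht, mul_div_cancel₀ _ hs.ne']
  calc b * t ^ s ≤ b ^ (α / (α - s)) / (α / (α - s)) + (t ^ s) ^ (α / s) / (α / s) :=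
        Real.young_inequality_of_nonneg hb (Real.rpow_nonneg ht s) hconj
    _ = s / α * t ^ α + (α - s) / α * b ^ (α / (α - s)) := by
        rw [hpow, div_div_eq_mul_div, div_div_eq_mul_div]
        ring

theorem integral_mul_rpow_le_young {Ω : Type*} [MeasurableSpace Ω] {m : Measure Ω}
    {s α : ℝ} (hs : 0 < s) (hsα : s < α) {b t : Ω → ℝ} (hb : ∀ x, 0 ≤ b x) (ht : ∀ x, 0 ≤ t x)
    (hb_int : Integrable (fun x => b x ^ (α / (α - s))) m)
    (ht_int : Integrable (fun x => t x ^ α) m) :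
    ∫ x, b x * t x ^ s ∂m ≤
      s / α * ∫ x, t x ^ α ∂m + (α - s) / α * ∫ x, b x ^ (α / (α - s)) ∂m := by
  rw [← integral_const_mul, ← integral_const_mul,
    ← integral_add (ht_int.const_mul _) (hb_int.const_mul _)]
  exact integral_mono_of_nonneg
    (Filter.Eventually.of_forall fun x => mul_nonneg (hb x) (Real.rpow_nonneg (ht x) s))
    ((ht_int.const_mul _).add (hb_int.const_mul _))
    (Filter.Eventually.of_forall fun x => mul_rpow_le_young hs hsα (hb x) (ht x))

theorem nonexistence_bound_general
    {Ω : Type*} [MeasurableSpace Ω] (m : Measure Ω)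
    (α s lam : ℝ) (hs : 1 < s) (hsα : s < α) (hlam : 0 < lam)
    (a : Ω → ℝ) (ha_nonneg : ∀ x, 0 ≤ a x)
    (ha_int : Integrable (fun x => a x ^ (α / (α - s))) m)
    (g : Ω → ℝ)
    (u : Ω → ℝ)
    (hu_pos : 0 < ∫ x, |u x| ^ α ∂m)
    (heq : (∫ x, g x ∂m) + ∫ x, |u x| ^ α ∂m = lam * ∫ x, a x * |u x| ^ s ∂m) :
    (∫ x, g x ∂m) <
      (α - s) / α * lam ^ (α / (α - s)) * ∫ x, a x ^ (α / (α - s)) ∂m := by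
  have hscaled : ∀ x, (lam * a x) ^ (α / (α - s)) = lam ^ (α / (α - s)) * a x ^ (α / (α - s)) :=
    fun x => Real.mul_rpow hlam.le (ha_nonneg x)
  have hyoung : lam * ∫ x, a x * |u x| ^ s ∂m ≤ s / α * ∫ x, |u x| ^ α ∂m +
      (α - s) / α * (lam ^ (α / (α - s)) * ∫ x, a x ^ (α / (α - s)) ∂m) := by
    have h := integral_mul_rpow_le_young (m := m) (by linarith) hsα
      (fun x => mul_nonneg hlam.le (ha_nonneg x)) (fun x => abs_nonneg (u x))
      (by simpa only [hscaled] using ha_int.const_mul (lam ^ (α / (α - s))))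
      -- the Bochner integral of a non-integrable function is `0`
      (Integrable.of_integral_ne_zero hu_pos.ne')
    simpa only [hscaled, mul_assoc, integral_const_mul] using h
  have hsplit : s / α * ∫ x, |u x| ^ α ∂m =
      ∫ x, |u x| ^ α ∂m - (α - s) / α * ∫ x, |u x| ^ α ∂m := by
    field_simp [show α ≠ 0 by linarith]
    ring
  have hdefect : 0 < (α - s) / α * ∫ x, |u x| ^ α ∂m :=
    mul_pos (div_pos (by linarith) (by linarith)) hu_pos
  linarith

/-- Quantitative core of the non-existence part of Theorem 2: if `1 < s < α`,
`λ > 0`, `a ≥ 0` with `a^(α/(α-s))` integrable, `g ≥ 0` integrable, `u ∈ L^α` with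
`∫ |u|^α > 0`, and `∫ g + ∫ |u|^α = λ ∫ a |u|^s`, then
`∫ g < ((α-s)/α) λ^(α/(α-s)) ∫ a^(α/(α-s))`. -/
theorem nonexistence_bound
    {Ω : Type*} [MeasurableSpace Ω] (m : Measure Ω)
    (α s lam : ℝ) (hs : 1 < s) (hsα : s < α) (hlam : 0 < lam)
    (a : Ω → ℝ) (ha_meas : Measurable a) (ha_nonneg : ∀ x, 0 ≤ a x)
    (ha_int : Integrable (fun x => a x ^ (α / (α - s))) m)
    (g : Ω → ℝ) (hg_int : Integrable g m) (hg_nonneg : ∀ x, 0 ≤ g x)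
    (u : Ω → ℝ) (hu : MemLp u (ENNReal.ofReal α) m)
    (hu_pos : 0 < ∫ x, |u x| ^ α ∂m)
    (heq : (∫ x, g x ∂m) + ∫ x, |u x| ^ α ∂m = lam * ∫ x, a x * |u x| ^ s ∂m) :
    (∫ x, g x ∂m) <
      (α - s) / α * lam ^ (α / (α - s)) * ∫ x, a x ^ (α / (α - s)) ∂m :=
  nonexistence_bound_general m α s lam hs hsα hlam a ha_nonneg ha_int g u hu_pos heq
end

section
/- Let 1 < p < q and define φ : [0,∞) → ℝ by φ(t) = (2/q)·t^{q/2} for t < 1 and φ(t) = (2/p)·t^{p/2} − 2(q−p)/(pq) for t ≥ 1. Then the map t ↦ φ(t²) (equal to (2/q)|t|^q for |t| < 1 and (2/p)|t|^p − 2(q−p)/(pq) for |t| ≥ 1) is strictly convex on [0,∞); that is, φ satisfies hypothesis (φ5). -/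
open Set Filter

/-- The double-phase potential generating the `(p,q)`-Laplace operator. -/
noncomputable def dpPhi (p q t : ℝ) : ℝ :=
  if t < 1 then 2 / q * t ^ (q / 2) else 2 / p * t ^ (p / 2) - 2 * (q - p) / (p * q)

/-!
For `t ≥ 0` we have `φ(t²) = 2/q·t^q` on `[0,1)` and `φ(t²) = 2/p·t^p − 2(q−p)/(pq)` on `[1,∞)`.
The constant makes the two pieces agree at `t = 1`, where both have slope `2`, so the function is
differentiable on `(0,∞)` with derivative `2t^(q−1)` below `1` and `2t^(p−1)` from `1` on. As
`p, q > 1` this derivative is strictly increasing (below `2` before `1`, at least `2` after), which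
gives strict convexity.
-/

section

variable {u v : ℝ → ℝ} {a : ℝ}

theorem Continuous.ite_lt (hu : Continuous u) (hv : Continuous v) (huv : u a = v a) :
    Continuous fun x => if x < a then u x else v x :=
  hu.if (fun x hx => by obtain rfl : x = a := frontier_Iio.subset hx; exact huv) hv

theorem HasDerivAt.ite_lt {d : ℝ} (hu : HasDerivAt u d a) (hv : HasDerivAt v d a)
    (huv : u a = v a) : HasDerivAt (fun x => if x < a then u x else v x) d a := by
  have hleft : HasDerivWithinAt (fun x => if x < a then u x else v x) d (Iic a) a := by
    refine hu.hasDerivWithinAt.congr (fun x hx => ?_) (by simp [huv])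
    rcases (mem_Iic.1 hx).lt_or_eq with hxa | rfl
    · simp [hxa]
    · simp [huv]
  have hright : HasDerivWithinAt (fun x => if x < a then u x else v x) d (Ici a) a :=
    hv.hasDerivWithinAt.congr (fun x hx => if_neg (not_lt.2 hx)) (if_neg (lt_irrefl a))
  simpa [Iic_union_Ici] using hleft.union hright

end

theorem strictMonoOn_ite_rpow {r s : ℝ} (hr : 0 < r) (hs : 0 < s) :
    StrictMonoOn (fun t : ℝ => if t < 1 then t ^ r else t ^ s) (Ioi 0) := by
  intro a ha b hb hab
  dsimp only
  split_ifs with ha1 hb1 hb1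
  · exact Real.rpow_lt_rpow ha.le hab hr
  · exact (Real.rpow_lt_one ha.le ha1 hr).trans_le (Real.one_le_rpow (not_lt.1 hb1) hs.le)
  · exact absurd (hab.trans hb1) ha1
  · exact Real.rpow_lt_rpow ha.le hab hs

theorem hasDerivAt_div_mul_rpow (c : ℝ) {r t : ℝ} (hr : r ≠ 0) (ht : t ≠ 0) :
    HasDerivAt (fun x : ℝ => c / r * x ^ r) (c * t ^ (r - 1)) t := by
  refine ((Real.hasDerivAt_rpow_const (p := r) (Or.inl ht)).const_mul (c / r)).congr_deriv ?_
  rw [← mul_assoc, div_mul_cancel₀ _ hr]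

noncomputable def dpPhiSq (p q t : ℝ) : ℝ :=
  if t < 1 then 2 / q * t ^ q else 2 / p * t ^ p - 2 * (q - p) / (p * q)

theorem dpPhi_sq {p q t : ℝ} (ht : 0 ≤ t) : dpPhi p q (t ^ 2) = dpPhiSq p q t := by
  have hpow (r : ℝ) : (t ^ 2) ^ (r / 2) = t ^ r := by
    rw [← Real.rpow_two, ← Real.rpow_mul ht]
    ring_nf
  simp only [dpPhi, dpPhiSq, sq_lt_one_iff₀ ht, hpow]

section

variable {p q : ℝ}

theorem dpPhiSq_pieces_eq_at_one (hp : p ≠ 0) (hq : q ≠ 0) :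
    2 / q * (1 : ℝ) ^ q = 2 / p * (1 : ℝ) ^ p - 2 * (q - p) / (p * q) := by
  simp only [Real.one_rpow]
  field_simp
  ring

theorem continuous_dpPhiSq (hp : 0 < p) (hq : 0 < q) : Continuous (dpPhiSq p q) :=
  (continuous_const.mul (Real.continuous_rpow_const hq.le)).ite_lt
    ((continuous_const.mul (Real.continuous_rpow_const hp.le)).sub continuous_const)
    (dpPhiSq_pieces_eq_at_one hp.ne' hq.ne')

theorem hasDerivAt_dpPhiSq (hp : p ≠ 0) (hq : q ≠ 0) {t : ℝ} (ht : 0 < t) :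
    HasDerivAt (dpPhiSq p q) (2 * if t < 1 then t ^ (q - 1) else t ^ (p - 1)) t := by
  have hu := hasDerivAt_div_mul_rpow 2 hq ht.ne'
  have hv := (hasDerivAt_div_mul_rpow 2 hp ht.ne').sub_const (2 * (q - p) / (p * q))
  rcases lt_trichotomy t 1 with ht1 | rfl | ht1
  · rw [if_pos ht1]
    exact hu.congr_of_eventuallyEq <| eventually_of_mem (Iio_mem_nhds ht1) fun x hx => if_pos hx
  · simp only [lt_irrefl, if_false, Real.one_rpow] at hu hv ⊢
    exact hu.ite_lt hv (dpPhiSq_pieces_eq_at_one hp hq)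
  · rw [if_neg ht1.not_gt]
    exact hv.congr_of_eventuallyEq <|
      eventually_of_mem (Ioi_mem_nhds ht1) fun x hx => if_neg (not_lt.2 hx.le)

theorem strictConvexOn_dpPhiSq (hp : 1 < p) (hq : 1 < q) :
    StrictConvexOn ℝ (Ici 0) (dpPhiSq p q) := by
  have hp0 : 0 < p := zero_lt_one.trans hp
  have hq0 : 0 < q := zero_lt_one.trans hq
  refine StrictMonoOn.strictConvexOn_of_deriv (convex_Ici 0)
    (continuous_dpPhiSq hp0 hq0).continuousOn ?_
  rw [interior_Ici]
  intro a ha b hb hab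
  rw [(hasDerivAt_dpPhiSq hp0.ne' hq0.ne' ha).deriv, (hasDerivAt_dpPhiSq hp0.ne' hq0.ne' hb).deriv]
  exact mul_lt_mul_of_pos_left (strictMonoOn_ite_rpow (sub_pos.2 hq) (sub_pos.2 hp) ha hb hab)
    two_pos

end

/-- For `1 < p < q`, the map `t ↦ φ(t²)` associated with the double-phase
potential is strictly convex on `[0,∞)` (hypothesis (φ5)). -/
theorem dpPhi_satisfies_phi5 (p q : ℝ) (hp : 1 < p) (hpq : p < q) :
    StrictConvexOn ℝ (Set.Ici 0) (fun t : ℝ => dpPhi p q (t ^ 2)) :=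
  (strictConvexOn_dpPhiSq hp (hp.trans hpq)).congr fun _ ht => (dpPhi_sq ht).symm
end
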